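/- Let P ∈ ℂ[x,y] be a commode quasi-homogeneous polynomial with coprime weights (p,q), which is monic as a polynomial in y. Then there exist k ∈ ℕ and λ₁,…,λ_k ∈ ℂ* such that P(x,y) = ∏_{ℓ=1}^k (y^p − λ_ℓ x^q), and this factorization is unique up to permutation of the λ_ℓ. -/

import Mathlib

open MvPolynomial

/-!
Setting `x = 1` loses no information on a quasi-homogeneous polynomial, because a monomial of
given weighted degree is determined by its `y`-exponent. As `y ∤ P` and `P` is monic in `y`,
the weighted degree is `m = pqk`; by coprimality every `y`-exponent of `P` is then a multiple
of `p`, so `P(1, y) = g(y^p)` with `g` monic of degree `k` and `g(0) ≠ 0`. Splitting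
`g = ∏ (z - λ_ℓ)` over `ℂ` and lifting back gives the factorization, and it is unique because
`P(1, y)` determines `g`, hence its multiset of roots.
-/

theorem Multiset.exists_map_univ_eq_of_card_eq {α : Type*} (s : Multiset α) {n : ℕ}
    (h : Multiset.card s = n) : ∃ l : Fin n → α, Finset.univ.val.map l = s := by
  obtain rfl : s.toList.length = n := (Multiset.length_toList s).trans h
  exact ⟨s.toList.get, by rw [Fin.univ_val_map, List.ofFn_get, Multiset.coe_toList]⟩

theorem Fintype.exists_equiv_of_map_univ_eq {ι κ α : Type*} [Fintype ι] [Fintype κ]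
    [DecidableEq α] {f : ι → α} {g : κ → α}
    (h : Finset.univ.val.map f = Finset.univ.val.map g) :
    ∃ σ : κ ≃ ι, ∀ j, f (σ j) = g j := by
  have hcard (c : α) : Fintype.card {j // g j = c} = Fintype.card {i // f i = c} := by
    simpa [Multiset.count_map, Fintype.card_subtype, Finset.card_def, Finset.filter_val,
      eq_comm] using congrArg (Multiset.count c) h.symm
  exact ⟨Equiv.ofFiberEquiv fun c => Fintype.equivOfCardEq (hcard c), Equiv.ofFiberEquiv_map _⟩

namespace Polynomial

theorem expand_contract_of_dvd {R : Type*} [CommSemiring R] {p : ℕ} (hp : p ≠ 0) {f : R[X]}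
    (hf : ∀ n, f.coeff n ≠ 0 → p ∣ n) : expand R p (contract p f) = f := by
  ext n
  rw [coeff_expand (Nat.pos_of_ne_zero hp), coeff_contract hp]
  split_ifs with hn
  · rw [Nat.div_mul_cancel hn]
  · exact (not_not.1 (mt (hf n) hn)).symm

section CommRing

variable {R ι κ : Type*} [CommRing R] [Fintype ι] [Fintype κ]

theorem prod_univ_X_sub_C (l : ι → R) :
    ∏ i, (X - C (l i)) = ((Finset.univ.val.map l).map (X - C ·)).prod := by
  rw [Finset.prod_eq_multiset_prod, Multiset.map_map]
  rfl

theorem roots_prod_univ_X_sub_C [IsDomain R] (l : ι → R) :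
    (∏ i, (X - C (l i))).roots = Finset.univ.val.map l := by
  rw [prod_univ_X_sub_C, roots_multiset_prod_X_sub_C]

theorem exists_equiv_of_prod_X_sub_C_eq [IsDomain R] {l : ι → R} {l' : κ → R}
    (h : ∏ i, (X - C (l i)) = ∏ j, (X - C (l' j))) :
    ∃ σ : κ ≃ ι, ∀ j, l (σ j) = l' j := by
  classical
  refine Fintype.exists_equiv_of_map_univ_eq ?_
  rw [← roots_prod_univ_X_sub_C, h, roots_prod_univ_X_sub_C]

end CommRing

theorem Monic.exists_eq_prod_X_sub_C {K : Type*} [Field K] [IsAlgClosed K] {g : K[X]}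
    (hg : g.Monic) (hg0 : g.coeff 0 ≠ 0) :
    ∃ l : Fin g.natDegree → K, (∀ i, l i ≠ 0) ∧ g = ∏ i, (X - C (l i)) := by
  obtain ⟨l, hl⟩ := g.roots.exists_map_univ_eq_of_card_eq
    (splits_iff_card_roots.1 (IsAlgClosed.splits g))
  refine ⟨l, fun i hi => hg0 ?_, ?_⟩
  · have hroot := isRoot_of_mem_roots (hl ▸ Multiset.mem_map_of_mem l (Finset.mem_univ i))
    rwa [hi, IsRoot, ← coeff_zero_eq_eval_zero] at hroot
  · rw [prod_univ_X_sub_C, hl]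
    exact (IsAlgClosed.splits g).eq_prod_roots_of_monic hg

end Polynomial

theorem Finsupp.weight_fin_two (w : Fin 2 → ℕ) (d : Fin 2 →₀ ℕ) :
    Finsupp.weight w d = w 0 * d 0 + w 1 * d 1 := by
  simp [Finsupp.weight_apply, Finsupp.sum_fintype, Fin.sum_univ_two, mul_comm]

namespace MvPolynomial

theorem exists_mem_support_apply_eq_zero_of_not_X_dvd {R σ : Type*} [CommSemiring R]
    {φ : MvPolynomial σ R} {i : σ} (h : ¬ X i ∣ φ) : ∃ d ∈ φ.support, d i = 0 := by
  by_contra! hd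
  refine h (φ.as_sum ▸ Finset.dvd_sum fun d hd' => ?_)
  exact X_dvd_monomial.2 (Or.inr (hd d hd'))

section CommSemiring

variable {R : Type*} [CommSemiring R]

noncomputable def evalXZeroOne : MvPolynomial (Fin 2) R →ₐ[R] Polynomial R :=
  aeval ![1, Polynomial.X]

theorem coeff_evalXZeroOne (φ : MvPolynomial (Fin 2) R) (n : ℕ) :
    (evalXZeroOne φ).coeff n = ∑ d ∈ φ.support with d 1 = n, coeff d φ := by
  conv_lhs => rw [φ.as_sum]
  rw [map_sum, Polynomial.finsetSum_coeff, Finset.sum_filter]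
  refine Finset.sum_congr rfl fun d _ => ?_
  simp [evalXZeroOne, aeval_monomial, Finsupp.prod_fintype, Polynomial.coeff_C_mul,
    Polynomial.coeff_X_pow, eq_comm]

theorem exists_mem_support_of_coeff_evalXZeroOne_ne_zero {φ : MvPolynomial (Fin 2) R} {n : ℕ}
    (h : (evalXZeroOne φ).coeff n ≠ 0) : ∃ d ∈ φ.support, d 1 = n := by
  rw [coeff_evalXZeroOne] at h
  obtain ⟨d, hd, -⟩ := Finset.exists_ne_zero_of_sum_ne_zero h
  exact ⟨d, Finset.mem_filter.1 hd⟩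

theorem natDegree_evalXZeroOne_le (φ : MvPolynomial (Fin 2) R) :
    (evalXZeroOne φ).natDegree ≤ φ.degreeOf 1 := by
  refine Polynomial.natDegree_le_iff_coeff_eq_zero.2 fun n hn => by_contra fun h => ?_
  obtain ⟨d, hd, rfl⟩ := exists_mem_support_of_coeff_evalXZeroOne_ne_zero h
  exact absurd (monomial_le_degreeOf 1 hd) (not_le.2 (by exact_mod_cast hn))

namespace IsWeightedHomogeneous

variable {w : Fin 2 → ℕ} {φ : MvPolynomial (Fin 2) R} {m : ℕ}

theorem coeff_evalXZeroOne (hw : w 0 ≠ 0) (hφ : IsWeightedHomogeneous w φ m)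
    {d : Fin 2 →₀ ℕ} (hd : d ∈ φ.support) :
    (evalXZeroOne φ).coeff (d 1) = coeff d φ := by
  rw [MvPolynomial.coeff_evalXZeroOne]
  refine Finset.sum_eq_single_of_mem d (Finset.mem_filter.2 ⟨hd, rfl⟩) fun d' hd' hne => ?_
  obtain ⟨hd'φ, hd'1⟩ := Finset.mem_filter.1 hd'
  refine absurd ?_ hne
  have hweight := (hφ (mem_support_iff.1 hd'φ)).trans (hφ (mem_support_iff.1 hd)).symm
  rw [Finsupp.weight_fin_two, Finsupp.weight_fin_two, hd'1, Nat.add_right_cancel_iff] at hweight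
  ext i
  fin_cases i
  · exact Nat.eq_of_mul_eq_mul_left (Nat.pos_of_ne_zero hw) hweight
  · exact hd'1

theorem dvd_of_coeff_evalXZeroOne_ne_zero {p q : ℕ} (hpq : p.Coprime q)
    (hφ : IsWeightedHomogeneous ![p, q] φ m) (hpm : p ∣ m) {n : ℕ}
    (h : (evalXZeroOne φ).coeff n ≠ 0) : p ∣ n := by
  obtain ⟨d, hd, rfl⟩ := exists_mem_support_of_coeff_evalXZeroOne_ne_zero h
  have hm := hφ (mem_support_iff.1 hd)
  simp only [Finsupp.weight_fin_two, Matrix.cons_val_zero, Matrix.cons_val_one] at hm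
  exact hpq.dvd_of_dvd_mul_left ((Nat.dvd_add_right (dvd_mul_right p (d 0))).1 (hm ▸ hpm))

theorem exists_expand_eq_evalXZeroOne [Nontrivial R] {p q : ℕ} (hp : 0 < p) (hpq : p.Coprime q)
    (hφ : IsWeightedHomogeneous ![p, q] φ m) (hy : ¬ X 1 ∣ φ)
    (hmonic : coeff (Finsupp.single 1 (φ.degreeOf 1)) φ = 1) :
    ∃ g : Polynomial R, g.Monic ∧ g.coeff 0 ≠ 0 ∧ m = g.natDegree * (p * q) ∧
      Polynomial.expand R p g = evalXZeroOne φ := by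
  set N := φ.degreeOf 1
  have hN : Finsupp.single 1 N ∈ φ.support := mem_support_iff.2 (hmonic ▸ one_ne_zero)
  have hfN : (evalXZeroOne φ).coeff N = 1 := by
    simpa [hmonic] using hφ.coeff_evalXZeroOne hp.ne' hN
  have hfdeg : (evalXZeroOne φ).natDegree = N :=
    Polynomial.natDegree_eq_of_le_of_coeff_ne_zero (natDegree_evalXZeroOne_le φ)
      (hfN ▸ one_ne_zero)
  obtain ⟨d, hd, hd1⟩ := exists_mem_support_apply_eq_zero_of_not_X_dvd hy
  have hpm : p ∣ m :=
    ⟨d 0, by simpa [Finsupp.weight_fin_two, hd1] using (hφ (mem_support_iff.1 hd)).symm⟩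
  have hexpand := Polynomial.expand_contract_of_dvd hp.ne' fun _ =>
    hφ.dvd_of_coeff_evalXZeroOne_ne_zero hpq hpm
  refine ⟨Polynomial.contract p (evalXZeroOne φ), ?_, ?_, ?_, hexpand⟩
  · rw [← Polynomial.monic_expand_iff hp, hexpand]
    exact Polynomial.monic_of_natDegree_le_of_coeff_eq_one N (natDegree_evalXZeroOne_le φ) hfN
  · rw [Polynomial.coeff_contract hp.ne', zero_mul, ← hd1, hφ.coeff_evalXZeroOne hp.ne' hd]
    exact mem_support_iff.1 hd
  · have hmN : m = q * N := by
      simpa [Finsupp.weight_fin_two] using (hφ (mem_support_iff.1 hN)).symm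
    have hdeg := Polynomial.natDegree_expand p (Polynomial.contract p (evalXZeroOne φ))
    rw [hexpand, hfdeg] at hdeg
    rw [hmN, hdeg]
    ring

end IsWeightedHomogeneous

end CommSemiring

section CommRing

variable {R : Type*} [CommRing R]

theorem IsWeightedHomogeneous.eq_of_evalXZeroOne_eq {w : Fin 2 → ℕ}
    {φ ψ : MvPolynomial (Fin 2) R} {m : ℕ} (hw : w 0 ≠ 0) (hφ : IsWeightedHomogeneous w φ m)
    (hψ : IsWeightedHomogeneous w ψ m) (h : evalXZeroOne φ = evalXZeroOne ψ) : φ = ψ := by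
  rw [← sub_eq_zero, ← support_eq_empty]
  refine Finset.eq_empty_of_forall_notMem fun d hd => mem_support_iff.1 hd ?_
  rw [← (hφ.sub hψ).coeff_evalXZeroOne hw hd, map_sub, h, sub_self, Polynomial.coeff_zero]

theorem evalXZeroOne_prod_X_pow_sub_C_mul_X_pow {ι : Type*} (s : Finset ι) (p q : ℕ)
    (l : ι → R) :
    evalXZeroOne (∏ i ∈ s, (X 1 ^ p - C (l i) * X 0 ^ q))
      = Polynomial.expand R p (∏ i ∈ s, (Polynomial.X - Polynomial.C (l i))) := by
  simp [evalXZeroOne]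

theorem isWeightedHomogeneous_prod_X_pow_sub_C_mul_X_pow {ι : Type*} (s : Finset ι) (p q : ℕ)
    (l : ι → R) :
    IsWeightedHomogeneous ![p, q] (∏ i ∈ s, (X 1 ^ p - C (l i) * X 0 ^ q))
      (s.card * (p * q)) := by
  have hfactor (c : R) : IsWeightedHomogeneous ![p, q] (X 1 ^ p - C c * X 0 ^ q) (p * q) := by
    have hy := (isWeightedHomogeneous_X R ![p, q] 1).pow p
    have hx := ((isWeightedHomogeneous_X R ![p, q] 0).pow q).C_mul c
    simp only [Matrix.cons_val_zero, Matrix.cons_val_one, smul_eq_mul] at hy hx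
    exact hy.sub (mul_comm p q ▸ hx)
  simpa [Finset.sum_const] using
    IsWeightedHomogeneous.prod s _ (fun _ => p * q) fun i _ => hfactor (l i)

end CommRing

end MvPolynomial

theorem commode_quasiHomogeneous_monic_factorization_general
    (p q m : ℕ) (hp : 0 < p) (hpq : Nat.Coprime p q)
    (P : MvPolynomial (Fin 2) ℂ)
    (hqh : ∀ e ∈ P.support, p * e 0 + q * e 1 = m)
    (hcy : ¬ X 1 ∣ P)
    (hmonic : MvPolynomial.coeff (Finsupp.single 1 (P.degreeOf 1)) P = 1) :
    ∃ (k : ℕ) (l : Fin k → ℂ), (∀ i, l i ≠ 0) ∧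
      P = ∏ i, (X 1 ^ p - C (l i) * X 0 ^ q) ∧
      ∀ (k' : ℕ) (l' : Fin k' → ℂ), (∀ i, l' i ≠ 0) →
        P = ∏ i, (X 1 ^ p - C (l' i) * X 0 ^ q) →
        ∃ σ : Fin k' ≃ Fin k, ∀ i, l (σ i) = l' i := by
  have hP : IsWeightedHomogeneous ![p, q] P m := fun d hd => by
    simpa [Finsupp.weight_fin_two] using hqh d (mem_support_iff.2 hd)
  obtain ⟨g, hg, hg0, hm, hgP⟩ := hP.exists_expand_eq_evalXZeroOne hp hpq hcy hmonic
  obtain ⟨l, hl0, hgl⟩ := hg.exists_eq_prod_X_sub_C hg0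
  have hfact : P = ∏ i, (X 1 ^ p - C (l i) * X 0 ^ q) := by
    refine hP.eq_of_evalXZeroOne_eq hp.ne' (hm ▸ ?_) ?_
    · simpa using isWeightedHomogeneous_prod_X_pow_sub_C_mul_X_pow Finset.univ p q l
    · rw [evalXZeroOne_prod_X_pow_sub_C_mul_X_pow, ← hgl, hgP]
  refine ⟨g.natDegree, l, hl0, hfact, fun k' l' _ hfact' => ?_⟩
  refine Polynomial.exists_equiv_of_prod_X_sub_C_eq (Polynomial.expand_injective hp ?_)
  rw [← evalXZeroOne_prod_X_pow_sub_C_mul_X_pow, ← evalXZeroOne_prod_X_pow_sub_C_mul_X_pow,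
    ← hfact, ← hfact']

/-- A commode quasi-homogeneous polynomial with coprime weights `(p,q)`,
monic in `y`, factors as `∏_{ℓ=1}^k (y^p − λ_ℓ x^q)` with `λ_ℓ ∈ ℂ*`, uniquely up to
permutation of the `λ_ℓ`. -/
theorem commode_quasiHomogeneous_monic_factorization
    (p q m : ℕ) (hp : 0 < p) (hq : 0 < q) (hpq : Nat.Coprime p q)
    (P : MvPolynomial (Fin 2) ℂ) (hP : P ≠ 0)
    (hqh : ∀ e ∈ P.support, p * e 0 + q * e 1 = m)
    (hcx : ¬ X 0 ∣ P) (hcy : ¬ X 1 ∣ P)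
    (hmonic : MvPolynomial.coeff (Finsupp.single 1 (P.degreeOf 1)) P = 1) :
    ∃ (k : ℕ) (l : Fin k → ℂ), (∀ i, l i ≠ 0) ∧
      P = ∏ i, (X 1 ^ p - C (l i) * X 0 ^ q) ∧
      ∀ (k' : ℕ) (l' : Fin k' → ℂ), (∀ i, l' i ≠ 0) →
        P = ∏ i, (X 1 ^ p - C (l' i) * X 0 ^ q) →
        ∃ σ : Fin k' ≃ Fin k, ∀ i, l (σ i) = l' i :=
  commode_quasiHomogeneous_monic_factorization_general p q m hp hpq P hqh hcy hmonic
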